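/- Let i ∈ O be an observed vertex whose graph distance in G to every hidden vertex is at least 3. Then for every observed j ∈ O, the (i,j) blocks of Δ and of Σ are both the zero T×T matrix; consequently, if the (i,j) block of Γ + Δ + Σ is nonzero, then the (i,j) block of Γ is nonzero. -/
import Mathlib


open Matrix ComplexOrder

/-- The block matrix with `(i,j)` block `H i j` (blocks of size `T × T`). -/
def ofBlocks {T : ℕ} {α β : Type*} (H : α → β → Matrix (Fin T) (Fin T) ℂ) :
    Matrix (α × Fin T) (β × Fin T) ℂ :=
  Matrix.of fun p q => H p.1 q.1 p.2 q.2

/-- The block-diagonal matrix with diagonal blocks `D i`. -/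
def blkDiag {T : ℕ} {α : Type*} [DecidableEq α] (D : α → Matrix (Fin T) (Fin T) ℂ) :
    Matrix (α × Fin T) (α × Fin T) ℂ :=
  Matrix.of fun p q => if p.1 = q.1 then D p.1 p.2 q.2 else 0

/-- The `(i,j)` block (of size `T × T`) of a block matrix. -/
def blk {T : ℕ} {α β : Type*} (A : Matrix (α × Fin T) (β × Fin T) ℂ) (i : α) (j : β) :
    Matrix (Fin T) (Fin T) ℂ :=
  Matrix.of fun a b => A (i, a) (j, b)

section Defs

variable {T : ℕ} {O Hid : Type*} [Fintype O] [Fintype Hid] [DecidableEq O] [DecidableEq Hid]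

/-- `Γ = (I − H_oo)ᴴ D_o (I − H_oo)`. -/
noncomputable def GammaM (Hoo : O → O → Matrix (Fin T) (Fin T) ℂ)
    (Do : O → Matrix (Fin T) (Fin T) ℂ) :
    Matrix (O × Fin T) (O × Fin T) ℂ :=
  (1 - ofBlocks Hoo)ᴴ * blkDiag Do * (1 - ofBlocks Hoo)

/-- `Δ = H_hoᴴ D_h H_ho`. -/
noncomputable def DeltaM (Hho : Hid → O → Matrix (Fin T) (Fin T) ℂ)
    (Dh : Hid → Matrix (Fin T) (Fin T) ℂ) :
    Matrix (O × Fin T) (O × Fin T) ℂ :=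
  (ofBlocks Hho)ᴴ * blkDiag Dh * ofBlocks Hho

/-- `Λ = H_ohᴴ D_o H_oh + D_h`. -/
noncomputable def LambdaM (Hoh : O → Hid → Matrix (Fin T) (Fin T) ℂ)
    (Do : O → Matrix (Fin T) (Fin T) ℂ) (Dh : Hid → Matrix (Fin T) (Fin T) ℂ) :
    Matrix (Hid × Fin T) (Hid × Fin T) ℂ :=
  (ofBlocks Hoh)ᴴ * blkDiag Do * ofBlocks Hoh + blkDiag Dh

/-- `Ψ = H_ohᴴ D_o (I − H_oo) + D_h H_ho`. -/
noncomputable def PsiM (Hoo : O → O → Matrix (Fin T) (Fin T) ℂ)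
    (Hoh : O → Hid → Matrix (Fin T) (Fin T) ℂ)
    (Hho : Hid → O → Matrix (Fin T) (Fin T) ℂ)
    (Do : O → Matrix (Fin T) (Fin T) ℂ) (Dh : Hid → Matrix (Fin T) (Fin T) ℂ) :
    Matrix (Hid × Fin T) (O × Fin T) ℂ :=
  (ofBlocks Hoh)ᴴ * blkDiag Do * (1 - ofBlocks Hoo) + blkDiag Dh * ofBlocks Hho

/-- `Σ = −Ψᴴ Λ⁻¹ Ψ`. -/
noncomputable def SigmaM (Hoo : O → O → Matrix (Fin T) (Fin T) ℂ)
    (Hoh : O → Hid → Matrix (Fin T) (Fin T) ℂ)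
    (Hho : Hid → O → Matrix (Fin T) (Fin T) ℂ)
    (Do : O → Matrix (Fin T) (Fin T) ℂ) (Dh : Hid → Matrix (Fin T) (Fin T) ℂ) :
    Matrix (O × Fin T) (O × Fin T) ℂ :=
  -((PsiM Hoo Hoh Hho Do Dh)ᴴ * (LambdaM Hoh Do Dh)⁻¹ * PsiM Hoo Hoh Hho Do Dh)

end Defs

section AuxLemmas

variable {T : ℕ} {O Hid : Type*} [Fintype O] [Fintype Hid] [DecidableEq O] [DecidableEq Hid]

lemma blk_add {α β : Type*} (A B : Matrix (α × Fin T) (β × Fin T) ℂ) (i : α) (j : β) :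
    blk (A + B) i j = blk A i j + blk B i j := rfl

lemma aux_left_zero (Hoh : O → Hid → Matrix (Fin T) (Fin T) ℂ)
    (Do : O → Matrix (Fin T) (Fin T) ℂ) (p : Hid × Fin T) (q : O × Fin T)
    (h : Hoh q.1 p.1 = 0) :
    ((ofBlocks Hoh)ᴴ * blkDiag Do) p q = 0 := by
  rw [Matrix.mul_apply]
  apply Finset.sum_eq_zero
  intro r _
  rcases eq_or_ne r.1 q.1 with hr | hr
  · have : (ofBlocks Hoh)ᴴ p r = 0 := by
      simp [Matrix.conjTranspose_apply, ofBlocks, hr, h]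
    rw [this, zero_mul]
  · have : blkDiag Do r q = 0 := by simp [blkDiag, hr]
    rw [this, mul_zero]

lemma psi_col_zero (Hoo : O → O → Matrix (Fin T) (Fin T) ℂ)
    (Hoh : O → Hid → Matrix (Fin T) (Fin T) ℂ)
    (Hho : Hid → O → Matrix (Fin T) (Fin T) ℂ)
    (Do : O → Matrix (Fin T) (Fin T) ℂ) (Dh : Hid → Matrix (Fin T) (Fin T) ℂ)
    (i : O)
    (h1 : ∀ l, Hho l i = 0) (h2 : ∀ l, Hoh i l = 0)
    (h3 : ∀ a l, Hoh a l = 0 ∨ Hoo a i = 0) :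
    ∀ (p : Hid × Fin T) (s : Fin T), PsiM Hoo Hoh Hho Do Dh p (i, s) = 0 := by
  intro p s
  show ((ofBlocks Hoh)ᴴ * blkDiag Do * ((1 : Matrix (O × Fin T) (O × Fin T) ℂ) - ofBlocks Hoo)) p (i, s)
      + (blkDiag Dh * ofBlocks Hho) p (i, s) = 0
  have hsecond : (blkDiag Dh * ofBlocks Hho) p (i, s) = 0 := by
    rw [Matrix.mul_apply]
    apply Finset.sum_eq_zero
    intro q _
    have : ofBlocks Hho q (i, s) = 0 := by simp [ofBlocks, h1 q.1]
    rw [this, mul_zero]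
  have hfirst : ((ofBlocks Hoh)ᴴ * blkDiag Do * ((1 : Matrix (O × Fin T) (O × Fin T) ℂ) - ofBlocks Hoo)) p (i, s) = 0 := by
    rw [Matrix.mul_apply]
    apply Finset.sum_eq_zero
    intro q _
    rcases h3 q.1 p.1 with h | h
    · rw [aux_left_zero Hoh Do p q h, zero_mul]
    · rcases eq_or_ne q.1 i with hq | hq
      · have : Hoh q.1 p.1 = 0 := by rw [hq]; exact h2 p.1
        rw [aux_left_zero Hoh Do p q this, zero_mul]
      · have : ((1 : Matrix (O × Fin T) (O × Fin T) ℂ) - ofBlocks Hoo) q (i, s) = 0 := by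
          have hne : q ≠ (i, s) := by
            intro hc; exact hq (by rw [hc])
          simp [Matrix.sub_apply, Matrix.one_apply, hne, ofBlocks, h]
        rw [this, mul_zero]
  rw [hfirst, hsecond, add_zero]

lemma delta_blk_zero (Hho : Hid → O → Matrix (Fin T) (Fin T) ℂ)
    (Dh : Hid → Matrix (Fin T) (Fin T) ℂ) (i j : O)
    (h1 : ∀ l, Hho l i = 0) :
    blk (DeltaM Hho Dh) i j = 0 := by
  ext a b
  show ((ofBlocks Hho)ᴴ * blkDiag Dh * ofBlocks Hho) (i, a) (j, b) = 0
  rw [Matrix.mul_assoc, Matrix.mul_apply]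
  apply Finset.sum_eq_zero
  intro r _
  have : (ofBlocks Hho)ᴴ (i, a) r = 0 := by
    simp [Matrix.conjTranspose_apply, ofBlocks, h1 r.1]
  rw [this, zero_mul]

lemma sigma_blk_zero (Hoo : O → O → Matrix (Fin T) (Fin T) ℂ)
    (Hoh : O → Hid → Matrix (Fin T) (Fin T) ℂ)
    (Hho : Hid → O → Matrix (Fin T) (Fin T) ℂ)
    (Do : O → Matrix (Fin T) (Fin T) ℂ) (Dh : Hid → Matrix (Fin T) (Fin T) ℂ)
    (i j : O)
    (hΨ : ∀ (p : Hid × Fin T) (s : Fin T), PsiM Hoo Hoh Hho Do Dh p (i, s) = 0) :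
    blk (SigmaM Hoo Hoh Hho Do Dh) i j = 0 := by
  ext a b
  show -((PsiM Hoo Hoh Hho Do Dh)ᴴ * (LambdaM Hoh Do Dh)⁻¹ * PsiM Hoo Hoh Hho Do Dh) (i, a) (j, b) = 0
  rw [neg_eq_zero, Matrix.mul_assoc, Matrix.mul_apply]
  apply Finset.sum_eq_zero
  intro r _
  have : (PsiM Hoo Hoh Hho Do Dh)ᴴ (i, a) r = 0 := by
    rw [Matrix.conjTranspose_apply, hΨ r a, star_zero]
  rw [this, zero_mul]

end AuxLemmas

/-- If an observed vertex `i` is at distance at least three from every hidden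
vertex, then the `(i,j)` blocks of `Δ` and `Σ` vanish for every observed `j`;
hence a nonzero `(i,j)` block of `Γ + Δ + Σ` forces a nonzero `(i,j)` block
of `Γ`. -/
theorem far_from_hidden_blocks_zero {T : ℕ} {V : Type*}
    [Fintype V] [DecidableEq V]
    (G : SimpleGraph V) (hG : G.Connected)
    (HidS : Set V) [DecidablePred (· ∈ HidS)]
    (hHid4 : ∀ l₁ ∈ HidS, ∀ l₂ ∈ HidS, l₁ ≠ l₂ → 4 ≤ G.dist l₁ l₂)
    (hT : 0 < T)
    (H : V → V → Matrix (Fin T) (Fin T) ℂ)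
    (hH : ∀ a b : V, (a = b ∨ ¬ G.Adj a b) → H a b = 0)
    (Do : {v : V // v ∉ HidS} → Matrix (Fin T) (Fin T) ℂ)
    (Dh : {v : V // v ∈ HidS} → Matrix (Fin T) (Fin T) ℂ)
    (hDo : ∀ i, (Do i).IsHermitian) (hDh : ∀ l, (Dh l).IsHermitian)
    (hΛunit : IsUnit (LambdaM (fun (a : {v : V // v ∉ HidS}) (l : {v : V // v ∈ HidS}) => H a.1 l.1) Do Dh))
    (i : {v : V // v ∉ HidS})
    (hfar : ∀ l ∈ HidS, 3 ≤ G.dist i.1 l) :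
    ∀ j : {v : V // v ∉ HidS},
      blk (DeltaM (fun (l : {v : V // v ∈ HidS}) (a : {v : V // v ∉ HidS}) => H l.1 a.1) Dh) i j = 0 ∧
      blk (SigmaM (fun (a b : {v : V // v ∉ HidS}) => H a.1 b.1)
            (fun (a : {v : V // v ∉ HidS}) (l : {v : V // v ∈ HidS}) => H a.1 l.1)
            (fun (l : {v : V // v ∈ HidS}) (a : {v : V // v ∉ HidS}) => H l.1 a.1)
            Do Dh) i j = 0 ∧
      (blk (GammaM (fun (a b : {v : V // v ∉ HidS}) => H a.1 b.1) Do
            + DeltaM (fun (l : {v : V // v ∈ HidS}) (a : {v : V // v ∉ HidS}) => H l.1 a.1) Dh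
            + SigmaM (fun (a b : {v : V // v ∉ HidS}) => H a.1 b.1)
                (fun (a : {v : V // v ∉ HidS}) (l : {v : V // v ∈ HidS}) => H a.1 l.1)
                (fun (l : {v : V // v ∈ HidS}) (a : {v : V // v ∉ HidS}) => H l.1 a.1)
                Do Dh) i j ≠ 0 →
        blk (GammaM (fun (a b : {v : V // v ∉ HidS}) => H a.1 b.1) Do) i j ≠ 0) := by
  classical
  intro j
  have hadj : ∀ a b : V, H a b ≠ 0 → G.Adj a b := by
    intro a b h
    by_contra hab
    exact h (hH a b (Or.inr hab))
  have hdist1 : ∀ a b : V, G.Adj a b → G.dist a b = 1 := fun a b h =>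
    (SimpleGraph.dist_eq_one_iff_adj).2 h
  -- key vanishing facts
  have key1 : ∀ l : {v : V // v ∈ HidS}, H l.1 i.1 = 0 := by
    intro l
    by_contra h
    have := hdist1 _ _ (hadj _ _ h)
    have h3 := hfar l.1 l.2
    rw [SimpleGraph.dist_comm] at h3
    omega
  have key2 : ∀ l : {v : V // v ∈ HidS}, H i.1 l.1 = 0 := by
    intro l
    by_contra h
    have := hdist1 _ _ (hadj _ _ h)
    have h3 := hfar l.1 l.2
    omega
  have key3 : ∀ (a : {v : V // v ∉ HidS}) (l : {v : V // v ∈ HidS}),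
      H a.1 l.1 = 0 ∨ H a.1 i.1 = 0 := by
    intro a l
    by_contra h
    push_neg at h
    have hal := hdist1 _ _ (hadj _ _ h.1)
    have hai := hdist1 _ _ (hadj _ _ h.2)
    have htri := hG.dist_triangle (u := i.1) (v := a.1) (w := l.1)
    have h3 := hfar l.1 l.2
    rw [SimpleGraph.dist_comm] at hai
    omega
  have hΨ := psi_col_zero (fun (a b : {v : V // v ∉ HidS}) => H a.1 b.1)
      (fun (a : {v : V // v ∉ HidS}) (l : {v : V // v ∈ HidS}) => H a.1 l.1)
      (fun (l : {v : V // v ∈ HidS}) (a : {v : V // v ∉ HidS}) => H l.1 a.1)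
      Do Dh i (fun l => key1 l) (fun l => key2 l) (fun a l => key3 a l)
  have hΔ := delta_blk_zero
      (fun (l : {v : V // v ∈ HidS}) (a : {v : V // v ∉ HidS}) => H l.1 a.1)
      Dh i j (fun l => key1 l)
  have hSig := sigma_blk_zero (fun (a b : {v : V // v ∉ HidS}) => H a.1 b.1)
      (fun (a : {v : V // v ∉ HidS}) (l : {v : V // v ∈ HidS}) => H a.1 l.1)
      (fun (l : {v : V // v ∈ HidS}) (a : {v : V // v ∉ HidS}) => H l.1 a.1)
      Do Dh i j hΨ
  refine ⟨hΔ, hSig, ?_⟩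
  intro hne
  rw [blk_add, blk_add, hΔ, hSig, add_zero, add_zero] at hne
  exact hne
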